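/- arXiv:1803.05343 — 2 statements merged into one kernel-verified Lean document; each statement's English description precedes it below -/
import Mathlib

section
/- Let a < b be reals and let U_n be an (n+1)-dimensional subspace of C^n([a,b],ℝ) possessing a non-negative Bernstein basis p_{n,0},…,p_{n,n}, and let f_0 ∈ U_n be strictly positive on [a,b] with D_{f_0}U_n := { (f/f_0)′ : f ∈ U_n } possessing a non-negative Bernstein basis q_{n-1,0},…,q_{n-1,n-1}. Let f_1 ∈ U_n be such that f_1/f_0 is strictly increasing on [a,b], write f_0 = Σ_{k=0}^n β_{n,k} p_{n,k} and f_1 = Σ_{k=0}^n γ_{n,k} p_{n,k}, assume β_{n,k} > 0 for all k, and define coefficients w_0,…,w_{n-1} by (f_1/f_0)′ = Σ_{k=0}^{n-1} w_k q_{n-1,k}. Then the sequence k ↦ γ_{n,k}/β_{n,k} is strictly increasing if and only if w_k > 0 for all k = 0,…,n−1. -/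
open Set Filter Topology

noncomputable section

/-- `p k`, `k = 0, …, n`, is a Bernstein basis of the `(n+1)`-dimensional subspace `U` of
`C^n([a,b], ℝ)`: it is a basis of `U` and each `p k` has a zero of order `k` at `a`
(derivatives of order `< k` vanish at `a`, the `k`-th does not) and a zero of order
`n - k` at `b`. -/
def IsBernsteinBasisOf (a b : ℝ) (n : ℕ) (U : Submodule ℝ (ℝ → ℝ))
    (p : Fin (n + 1) → ℝ → ℝ) : Prop :=
  (∀ k, p k ∈ U) ∧ LinearIndependent ℝ p ∧ Submodule.span ℝ (Set.range p) = U ∧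
  ∀ k : Fin (n + 1),
    (∀ j : ℕ, j < (k : ℕ) → iteratedDeriv j (p k) a = 0) ∧
    iteratedDeriv (k : ℕ) (p k) a ≠ 0 ∧
    (∀ j : ℕ, j < n - (k : ℕ) → iteratedDeriv j (p k) b = 0) ∧
    iteratedDeriv (n - (k : ℕ)) (p k) b ≠ 0

/-- `q k`, `k = 0, …, n-1`, is a Bernstein basis of the `n`-dimensional space
`D_{f₀}U = { (f/f₀)' : f ∈ U }`: every `q k` lies in `D_{f₀}U`, every element of `D_{f₀}U`
lies in the span of the `q k`, the family is linearly independent, and each `q k` has a zero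
of order `k` at `a` and a zero of order `n - 1 - k` at `b`. -/
def IsBernsteinBasisOfD (a b : ℝ) (n : ℕ) (f₀ : ℝ → ℝ) (U : Submodule ℝ (ℝ → ℝ))
    (q : Fin n → ℝ → ℝ) : Prop :=
  (∀ k, ∃ f ∈ U, q k = deriv (fun x => f x / f₀ x)) ∧
  (∀ f ∈ U, deriv (fun x => f x / f₀ x) ∈ Submodule.span ℝ (Set.range q)) ∧
  LinearIndependent ℝ q ∧
  ∀ k : Fin n,
    (∀ j : ℕ, j < (k : ℕ) → iteratedDeriv j (q k) a = 0) ∧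
    iteratedDeriv (k : ℕ) (q k) a ≠ 0 ∧
    (∀ j : ℕ, j < n - 1 - (k : ℕ) → iteratedDeriv j (q k) b = 0) ∧
    iteratedDeriv (n - 1 - (k : ℕ)) (q k) b ≠ 0

/-!
Write `f = ∑ c j * p j` and `(f / f₀)' = ∑ v i * q i`. Since `p j` vanishes to order `j` at `a`
and to order `n - j` at `b`, the function `(p j / f₀)'` vanishes to orders `j - 1` and
`n - 1 - j` there, and comparing Taylor coefficients against the triangular family `q` shows
that only `q (j - 1)` and `q j` occur in it. Hence `v i` depends only on `c i` and `c (i + 1)`,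
and since `f₀ / f₀` is constant, `v i = R i * (c (i + 1) / β (i + 1) - c i / β i)` for constants
`R i` independent of `f`. Taking `f` with `(f / f₀)' = q i ≥ 0`, the quotient `f / f₀` increases
on `[a, b]`, and its endpoint values are `c 0 / β 0` and `c n / β n`; telescoping gives `R i > 0`.
-/

section Vanishing

variable {𝕜 : Type*} [NontriviallyNormedField 𝕜] {f g : 𝕜 → 𝕜} {x : 𝕜} {m : ℕ}

def VanishesToOrder (f : 𝕜 → 𝕜) (x : 𝕜) (m : ℕ) : Prop :=
  ∀ j < m, iteratedDeriv j f x = 0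

namespace VanishesToOrder

theorem deriv (h : VanishesToOrder f x m) : VanishesToOrder (deriv f) x (m - 1) := fun j hj => by
  rw [← iteratedDeriv_succ']
  exact h (j + 1) (by omega)

theorem mul (h : VanishesToOrder f x m) (hf : ContDiffAt 𝕜 m f x) (hg : ContDiffAt 𝕜 m g x) :
    VanishesToOrder (fun y => f y * g y) x m := fun j hj => by
  have hjm : (j : WithTop ℕ∞) ≤ m := by exact_mod_cast hj.le
  rw [iteratedDeriv_fun_mul (hf.of_le hjm) (hg.of_le hjm)]
  refine Finset.sum_eq_zero fun i hi => ?_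
  rw [h i (by rw [Finset.mem_range] at hi; omega), mul_zero, zero_mul]

theorem deriv_div (h : VanishesToOrder f x m) (hf : ContDiffAt 𝕜 m f x)
    (hg : ContDiffAt 𝕜 m g x) (hgx : g x ≠ 0) :
    VanishesToOrder (_root_.deriv fun y => f y / g y) x (m - 1) := by
  simp only [div_eq_mul_inv]
  exact (h.mul hf (hg.inv hgx)).deriv

theorem of_eventuallyEq_zero (h : f =ᶠ[𝓝 x] 0) : VanishesToOrder f x m := fun j _ => by
  rw [(h.iteratedDeriv j).eq_of_nhds, Pi.zero_def, iteratedDeriv_fun_const_zero]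

end VanishesToOrder

theorem coeff_eq_zero_of_vanishesToOrder_sum {ι : Type*} [Fintype ι] {q : ι → 𝕜 → 𝕜}
    {ord : ι → ℕ} {N M : ℕ} {d : ι → 𝕜} (hord : Function.Injective ord)
    (hordN : ∀ i, ord i ≤ N) (hsmooth : ∀ i, ContDiffAt 𝕜 N (q i) x)
    (hq : ∀ i, VanishesToOrder (q i) x (ord i)) (hq₀ : ∀ i, iteratedDeriv (ord i) (q i) x ≠ 0)
    (h : VanishesToOrder (fun y => ∑ i, d i * q i y) x M) {i : ι} (hi : ord i < M) :
    d i = 0 := by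
  induction hm : ord i using Nat.strong_induction_on generalizing i with
  | _ m ih =>
    have h0 := h m (hm ▸ hi)
    rw [iteratedDeriv_fun_sum fun l _ =>
      (contDiffAt_const.mul (hsmooth l)).of_le (by exact_mod_cast hm ▸ hordN i)] at h0
    simp only [iteratedDeriv_const_mul_field] at h0
    rw [Finset.sum_eq_single i] at h0
    · exact (mul_eq_zero.mp h0).resolve_right (hm ▸ hq₀ i)
    · intro l _ hl
      rcases lt_trichotomy (ord l) m with hlt | heq | hgt
      · rw [ih _ hlt (hlt.trans (hm ▸ hi)) rfl, zero_mul]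
      · exact absurd (hord (heq.trans hm.symm)) hl
      · rw [hq l m hgt, mul_zero]
    · simp

theorem coeff_eq_of_sum_eventuallyEq {ι : Type*} [Fintype ι] {q : ι → 𝕜 → 𝕜}
    {ord : ι → ℕ} {N : ℕ} {d e : ι → 𝕜} (hord : Function.Injective ord)
    (hordN : ∀ i, ord i ≤ N) (hsmooth : ∀ i, ContDiffAt 𝕜 N (q i) x)
    (hq : ∀ i, VanishesToOrder (q i) x (ord i)) (hq₀ : ∀ i, iteratedDeriv (ord i) (q i) x ≠ 0)
    (h : (fun y => ∑ i, d i * q i y) =ᶠ[𝓝 x] fun y => ∑ i, e i * q i y) : d = e := by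
  funext i
  have hvan : VanishesToOrder (fun y => ∑ i, (d i - e i) * q i y) x (N + 1) :=
    .of_eventuallyEq_zero <| h.mono fun y hy => by
      simp only [sub_mul, Finset.sum_sub_distrib, hy, sub_self, Pi.zero_apply]
  exact sub_eq_zero.mp <| coeff_eq_zero_of_vanishesToOrder_sum hord hordN hsmooth hq hq₀ hvan
    (Nat.lt_succ_of_le (hordN i))

theorem deriv_sum_mul_div {ι : Type*} (s : Finset ι) {p : ι → 𝕜 → 𝕜}
    (hp : ∀ j ∈ s, DifferentiableAt 𝕜 (p j) x)
    (hg : DifferentiableAt 𝕜 g x) (hx : g x ≠ 0) (c : ι → 𝕜) :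
    deriv (fun y => (∑ j ∈ s, c j * p j y) / g y) x
      = ∑ j ∈ s, c j * deriv (fun y => p j y / g y) x := by
  simp only [Finset.sum_div, mul_div_assoc]
  rw [deriv_fun_sum (A := fun j y => c j * (p j y / g y))
    fun j hj => ((hp j hj).div hg hx).const_mul (c j)]
  simp only [deriv_const_mul_field']

end Vanishing

theorem Fin.sum_univ_succ_sub_castSucc {M : Type*} [AddCommGroup M] {n : ℕ}
    (f : Fin (n + 1) → M) : ∑ i : Fin n, (f i.succ - f i.castSucc) = f (Fin.last n) - f 0 := by
  induction n with
  | zero => simp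
  | succ n ih =>
    rw [Fin.sum_univ_castSucc]
    simp only [Fin.succ_castSucc, ih fun i => f i.castSucc, Fin.succ_last, Fin.castSucc_zero]
    abel

theorem pos_of_forall_exists_mul_sub_eq_single {n : ℕ} {R : Fin n → ℝ}
    (h : ∀ k, ∃ u : Fin (n + 1) → ℝ, u 0 ≤ u (Fin.last n) ∧
      ∀ j, R j * (u j.succ - u j.castSucc) = (Pi.single k 1 : Fin n → ℝ) j) (k : Fin n) :
    0 < R k := by
  have hR : ∀ j, R j ≠ 0 := fun j hj => by
    obtain ⟨u, -, hu⟩ := h j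
    simpa [hj] using hu j
  obtain ⟨u, hmono, hu⟩ := h k
  have hdiff : ∀ j ≠ k, u j.succ - u j.castSucc = 0 := fun j hj => by
    simpa [Pi.single_apply, hj, hR j] using hu j
  have hsum : u (Fin.last n) - u 0 = u k.succ - u k.castSucc := by
    rw [← Fin.sum_univ_succ_sub_castSucc,
      Finset.sum_eq_single k (fun j _ hj => hdiff j hj) (by simp)]
  refine pos_of_mul_pos_left (b := u k.succ - u k.castSucc) ?_ (by linarith)
  simp [hu k]

section Bernstein

variable {n : ℕ} {a b : ℝ} {U : Submodule ℝ (ℝ → ℝ)} {p : Fin (n + 1) → ℝ → ℝ}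
  {f₀ : ℝ → ℝ} {q : Fin n → ℝ → ℝ}

namespace IsBernsteinBasisOf

theorem sum_mul_apply_left (hp : IsBernsteinBasisOf a b n U p) (c : Fin (n + 1) → ℝ) :
    ∑ j, c j * p j a = c 0 * p 0 a :=
  Finset.sum_eq_single 0 (fun j _ hj => by
    rw [show p j a = 0 by simpa using (hp.2.2.2 j).1 0 (Fin.pos_iff_ne_zero.mpr hj), mul_zero])
    (by simp)

theorem sum_mul_apply_right (hp : IsBernsteinBasisOf a b n U p) (c : Fin (n + 1) → ℝ) :
    ∑ j, c j * p j b = c (Fin.last n) * p (Fin.last n) b :=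
  Finset.sum_eq_single (Fin.last n) (fun j _ hj => by
    rw [show p j b = 0 by simpa using (hp.2.2.2 j).2.2.1 0 (by
      have := Fin.val_lt_last hj; omega), mul_zero])
    (by simp)

theorem sum_div_sum_apply_left (hp : IsBernsteinBasisOf a b n U p) (c β : Fin (n + 1) → ℝ) :
    (∑ j, c j * p j a) / (∑ j, β j * p j a) = c 0 / β 0 := by
  rw [hp.sum_mul_apply_left, hp.sum_mul_apply_left]
  exact mul_div_mul_right _ _ (by simpa using (hp.2.2.2 0).2.1)

theorem sum_div_sum_apply_right (hp : IsBernsteinBasisOf a b n U p) (c β : Fin (n + 1) → ℝ) :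
    (∑ j, c j * p j b) / (∑ j, β j * p j b) = c (Fin.last n) / β (Fin.last n) := by
  rw [hp.sum_mul_apply_right, hp.sum_mul_apply_right]
  exact mul_div_mul_right _ _ (by simpa using (hp.2.2.2 (Fin.last n)).2.2.2)

end IsBernsteinBasisOf

namespace IsBernsteinBasisOfD

theorem exists_coeff (hq : IsBernsteinBasisOfD a b n f₀ U q) {f : ℝ → ℝ} (hf : f ∈ U) :
    ∃ ρ : Fin n → ℝ, ∀ x, deriv (fun y => f y / f₀ y) x = ∑ i, ρ i * q i x := by
  obtain ⟨ρ, hρ⟩ := (Submodule.mem_span_range_iff_exists_fun ℝ).mp (hq.2.1 f hf)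
  exact ⟨ρ, fun x => by simp [← hρ, Finset.sum_apply]⟩

theorem contDiffAt (hq : IsBernsteinBasisOfD a b n f₀ U q) (hU : ∀ f ∈ U, ContDiff ℝ n f)
    (hf₀U : f₀ ∈ U) {x : ℝ} (hx : f₀ x ≠ 0) (i : Fin n) : ContDiffAt ℝ (n - 1 : ℕ) (q i) x := by
  obtain ⟨φ, hφU, hφ⟩ := hq.1 i
  rw [hφ]
  exact ((hU φ hφU).contDiffAt.div (hU f₀ hf₀U).contDiffAt hx).derivWithin
    (by norm_cast; have := i.pos; omega)

theorem coeff_eq_of_eventuallyEq (hq : IsBernsteinBasisOfD a b n f₀ U q)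
    (hU : ∀ f ∈ U, ContDiff ℝ n f) (hf₀U : f₀ ∈ U) (ha : f₀ a ≠ 0) {d e : Fin n → ℝ}
    (h : (fun y => ∑ i, d i * q i y) =ᶠ[𝓝 a] fun y => ∑ i, e i * q i y) : d = e :=
  coeff_eq_of_sum_eventuallyEq (ord := Fin.val) (N := n - 1) Fin.val_injective
    (fun i => by omega) (hq.contDiffAt hU hf₀U ha) (fun i => (hq.2.2.2 i).1)
    (fun i => (hq.2.2.2 i).2.1) h

theorem coeff_deriv_div_eq_zero (hq : IsBernsteinBasisOfD a b n f₀ U q)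
    (hp : IsBernsteinBasisOf a b n U p) (hU : ∀ f ∈ U, ContDiff ℝ n f) (hf₀U : f₀ ∈ U)
    (ha : f₀ a ≠ 0) (hb : f₀ b ≠ 0) {j : Fin (n + 1)} {ρ : Fin n → ℝ}
    (hρ : ∀ x, deriv (fun y => p j y / f₀ y) x = ∑ i, ρ i * q i x) {i : Fin n}
    (hji : j ≠ i.castSucc) (hji' : j ≠ i.succ) : ρ i = 0 := by
  have hρ' : deriv (fun y => p j y / f₀ y) = fun x => ∑ i, ρ i * q i x := funext hρ
  have hpj : ContDiff ℝ n (p j) := hU _ (hp.1 j)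
  have hf₀ : ContDiff ℝ n f₀ := hU f₀ hf₀U
  have hji₁ : (j : ℕ) ≠ i := fun h => hji (Fin.ext h)
  have hji₂ : (j : ℕ) ≠ i + 1 := fun h => hji' (Fin.ext (by simpa using h))
  rcases (by omega : (j : ℕ) < i ∨ (i : ℕ) + 1 < j) with hlt | hlt
  · have hvan : VanishesToOrder (fun x => ∑ i, ρ i * q i x) b (n - j - 1) :=
      hρ' ▸ VanishesToOrder.deriv_div (hp.2.2.2 j).2.2.1
        (hpj.contDiffAt.of_le (by exact_mod_cast Nat.sub_le n j))
        (hf₀.contDiffAt.of_le (by exact_mod_cast Nat.sub_le n j)) hb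
    exact coeff_eq_zero_of_vanishesToOrder_sum (ord := fun i : Fin n => n - 1 - i) (N := n - 1)
      (fun i i' h => Fin.ext (by simp only at h; omega)) (fun i => by omega)
      (hq.contDiffAt hU hf₀U hb) (fun i => (hq.2.2.2 i).2.2.1) (fun i => (hq.2.2.2 i).2.2.2)
      hvan (by omega)
  · have hvan : VanishesToOrder (fun x => ∑ i, ρ i * q i x) a (j - 1) :=
      hρ' ▸ VanishesToOrder.deriv_div (hp.2.2.2 j).1
        (hpj.contDiffAt.of_le (by exact_mod_cast j.is_le))
        (hf₀.contDiffAt.of_le (by exact_mod_cast j.is_le)) ha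
    exact coeff_eq_zero_of_vanishesToOrder_sum (ord := Fin.val) (N := n - 1) Fin.val_injective
      (fun i => by omega) (hq.contDiffAt hU hf₀U ha) (fun i => (hq.2.2.2 i).1)
      (fun i => (hq.2.2.2 i).2.1) hvan (by omega)


theorem coeff_eq_mul_sub (hq : IsBernsteinBasisOfD a b n f₀ U q)
    (hp : IsBernsteinBasisOf a b n U p) (hU : ∀ f ∈ U, ContDiff ℝ n f) (hf₀U : f₀ ∈ U)
    (ha : f₀ a ≠ 0) (hb : f₀ b ≠ 0) {β : Fin (n + 1) → ℝ} (hβ : ∀ x, f₀ x = ∑ k, β k * p k x)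
    (hβ₀ : ∀ k, β k ≠ 0) {ρ : Fin (n + 1) → Fin n → ℝ}
    (hρ : ∀ j x, deriv (fun y => p j y / f₀ y) x = ∑ i, ρ j i * q i x)
    {c : Fin (n + 1) → ℝ} {v : Fin n → ℝ}
    (hv : ∀ x, deriv (fun y => (∑ j, c j * p j y) / f₀ y) x = ∑ i, v i * q i x) (i : Fin n) :
    v i = β i.succ * ρ i.succ i * (c i.succ / β i.succ - c i.castSucc / β i.castSucc) := by
  have hdiff : ∀ f ∈ U, Differentiable ℝ f := fun f hf =>
    (hU f hf).differentiable (by exact_mod_cast i.pos.ne')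
  have hcoeff : ∀ c : Fin (n + 1) → ℝ, deriv (fun y => (∑ j, c j * p j y) / f₀ y)
      =ᶠ[𝓝 a] fun x => ∑ i, (∑ j, c j * ρ j i) * q i x := fun c =>
    ((hU f₀ hf₀U).continuous.continuousAt.eventually_ne ha).mono fun x hx => by
      rw [deriv_sum_mul_div _ (fun j _ => hdiff _ (hp.1 j) x) (hdiff f₀ hf₀U x) hx]
      simp only [hρ, Finset.mul_sum, Finset.sum_mul, mul_assoc]
      exact Finset.sum_comm
  have hv' : v i = ∑ j, c j * ρ j i :=
    congrFun (hq.coeff_eq_of_eventuallyEq hU hf₀U ha ((funext hv).symm ▸ hcoeff c)) i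
  have hβρ : (fun i => ∑ j, β j * ρ j i) = 0 := by
    refine hq.coeff_eq_of_eventuallyEq hU hf₀U ha ((hcoeff β).symm.trans ?_)
    have hone : (fun y => (∑ j, β j * p j y) / f₀ y) =ᶠ[𝓝 a] fun _ => 1 :=
      ((hU f₀ hf₀U).continuous.continuousAt.eventually_ne ha).mono fun y hy => by
        simp only [← hβ y, div_self hy]
    exact hone.deriv.mono fun y hy => by simp [hy]
  have hpair : ∀ c : Fin (n + 1) → ℝ,
      ∑ j, c j * ρ j i = c i.castSucc * ρ i.castSucc i + c i.succ * ρ i.succ i := fun c =>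
    Finset.sum_eq_add _ _ (Fin.castSucc_lt_succ (i := i)).ne (fun j _ hj => by
      rw [hq.coeff_deriv_div_eq_zero hp hU hf₀U ha hb (hρ j) hj.1 hj.2, mul_zero])
      (by simp) (by simp)
  have h0 := congrFun hβρ i
  simp only [hpair, Pi.zero_apply] at h0
  rw [hv', hpair c]
  field_simp [hβ₀]
  linear_combination c i.castSucc * h0

theorem exists_coeff_deriv_div_eq_and_le (hq : IsBernsteinBasisOfD a b n f₀ U q)
    (hp : IsBernsteinBasisOf a b n U p) (hU : ∀ f ∈ U, ContDiff ℝ n f) (hf₀U : f₀ ∈ U)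
    (hab : a ≤ b) (hf₀pos : ∀ x ∈ Icc a b, 0 < f₀ x) (hqnn : ∀ k, ∀ x ∈ Icc a b, 0 ≤ q k x)
    {β : Fin (n + 1) → ℝ} (hβ : ∀ x, f₀ x = ∑ k, β k * p k x) (k : Fin n) :
    ∃ c : Fin (n + 1) → ℝ, (∀ x, deriv (fun y => (∑ j, c j * p j y) / f₀ y) x = q k x) ∧
      c 0 / β 0 ≤ c (Fin.last n) / β (Fin.last n) := by
  obtain ⟨φ, hφU, hφ⟩ := hq.1 k
  obtain ⟨c, hc⟩ := (Submodule.mem_span_range_iff_exists_fun ℝ).mp (hp.2.2.1 ▸ hφU)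
  have hφc : ∀ y, φ y = ∑ j, c j * p j y := fun y => by simp [← hc, Finset.sum_apply]
  have hn : (n : WithTop ℕ∞) ≠ 0 := by exact_mod_cast k.pos.ne'
  have hf₀ne : ∀ x ∈ Icc a b, f₀ x ≠ 0 := fun x hx => (hf₀pos x hx).ne'
  have hmono : MonotoneOn (fun y => φ y / f₀ y) (Icc a b) :=
    monotoneOn_of_deriv_nonneg (convex_Icc a b)
      ((hU φ hφU).continuous.continuousOn.div (hU f₀ hf₀U).continuous.continuousOn hf₀ne)
      (((hU φ hφU).differentiable hn).differentiableOn.div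
        ((hU f₀ hf₀U).differentiable hn).differentiableOn fun x hx => hf₀ne x (interior_subset hx))
      fun x hx => hφ ▸ hqnn k x (interior_subset hx)
  refine ⟨c, fun x => by simp only [← hφc, ← hφ], ?_⟩
  have hle := hmono (left_mem_Icc.2 hab) (right_mem_Icc.2 hab) hab
  simp only [hφc, hβ] at hle
  rwa [hp.sum_div_sum_apply_left, hp.sum_div_sum_apply_right] at hle

end IsBernsteinBasisOfD

end Bernstein

theorem ratio_strictMono_iff_w_pos_general
    (n : ℕ) (a b : ℝ) (hab : a < b)
    (U : Submodule ℝ (ℝ → ℝ))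
    (hUsmooth : ∀ f ∈ U, ContDiff ℝ (n : ℕ∞) f)
    (p : Fin (n + 1) → ℝ → ℝ)
    (hp : IsBernsteinBasisOf a b n U p)
    (f₀ f₁ : ℝ → ℝ) (hf₀U : f₀ ∈ U)
    (hf₀pos : ∀ x ∈ Set.Icc a b, 0 < f₀ x)
    (q : Fin n → ℝ → ℝ)
    (hq : IsBernsteinBasisOfD a b n f₀ U q)
    (hqnn : ∀ k, ∀ x ∈ Set.Icc a b, 0 ≤ q k x)
    (β γ : Fin (n + 1) → ℝ)
    (hβ : ∀ x, f₀ x = ∑ k, β k * p k x)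
    (hγ : ∀ x, f₁ x = ∑ k, γ k * p k x)
    (hβpos : ∀ k, 0 < β k)
    (w : Fin n → ℝ)
    (hw : ∀ x, deriv (fun y => f₁ y / f₀ y) x = ∑ k, w k * q k x) :
    (StrictMono fun k => γ k / β k) ↔ ∀ k, 0 < w k := by
  have ha : f₀ a ≠ 0 := (hf₀pos a (left_mem_Icc.2 hab.le)).ne'
  have hb : f₀ b ≠ 0 := (hf₀pos b (right_mem_Icc.2 hab.le)).ne'
  choose ρ hρ using fun j => hq.exists_coeff (hp.1 j)
  have key := fun c v hv => hq.coeff_eq_mul_sub hp hUsmooth hf₀U ha hb hβ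
    (fun k => (hβpos k).ne') hρ (c := c) (v := v) hv
  have hR : ∀ i, 0 < β i.succ * ρ i.succ i := pos_of_forall_exists_mul_sub_eq_single fun k => by
    obtain ⟨c, hc, hle⟩ :=
      hq.exists_coeff_deriv_div_eq_and_le hp hUsmooth hf₀U hab.le hf₀pos hqnn hβ k
    refine ⟨fun j => c j / β j, hle, fun j => (key c _ (fun x => ?_) j).symm⟩
    simp [hc, Pi.single_apply]
  simp only [hγ] at hw
  simp only [Fin.strictMono_iff_lt_succ, key γ w hw, mul_pos_iff_of_pos_left (hR _), sub_pos]

/-- Theorem (b) ⟺ (c), strict version: `k ↦ γ k / β k` is strictly increasing iff all the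
coefficients `w k` of `(f₁/f₀)'` in the Bernstein basis of `D_{f₀}U` are strictly positive. -/
theorem ratio_strictMono_iff_w_pos
    (n : ℕ) (a b : ℝ) (hab : a < b)
    (U : Submodule ℝ (ℝ → ℝ))
    (hUdim : Module.finrank ℝ ↥U = n + 1)
    (hUsmooth : ∀ f ∈ U, ContDiff ℝ (n : ℕ∞) f)
    (p : Fin (n + 1) → ℝ → ℝ)
    (hp : IsBernsteinBasisOf a b n U p)
    (hpnn : ∀ k, ∀ x ∈ Set.Icc a b, 0 ≤ p k x)
    (f₀ f₁ : ℝ → ℝ) (hf₀U : f₀ ∈ U) (hf₁U : f₁ ∈ U)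
    (hf₀pos : ∀ x ∈ Set.Icc a b, 0 < f₀ x)
    (q : Fin n → ℝ → ℝ)
    (hq : IsBernsteinBasisOfD a b n f₀ U q)
    (hqnn : ∀ k, ∀ x ∈ Set.Icc a b, 0 ≤ q k x)
    (hmono : StrictMonoOn (fun x => f₁ x / f₀ x) (Set.Icc a b))
    (β γ : Fin (n + 1) → ℝ)
    (hβ : ∀ x, f₀ x = ∑ k, β k * p k x)
    (hγ : ∀ x, f₁ x = ∑ k, γ k * p k x)
    (hβpos : ∀ k, 0 < β k)
    (w : Fin n → ℝ)
    (hw : ∀ x, deriv (fun y => f₁ y / f₀ y) x = ∑ k, w k * q k x) :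
    (StrictMono fun k => γ k / β k) ↔ ∀ k, 0 < w k :=
  ratio_strictMono_iff_w_pos_general n a b hab U hUsmooth p hp f₀ f₁ hf₀U hf₀pos q hq hqnn β γ hβ hγ
    hβpos w hw
end
end

section
/- Let a < b be reals, let U_n be an (n+1)-dimensional subspace of C^n([a,b],ℝ) possessing a non-negative Bernstein basis p_{n,0},…,p_{n,n}, let f_0 ∈ U_n be strictly positive on [a,b], and suppose D_{f_0}U_n := { (f/f_0)′ : f ∈ U_n } possesses a positive Bernstein basis q_{n-1,0},…,q_{n-1,n-1} (each q_{n-1,k} > 0 on (a,b)). Let f_1 ∈ U_n be such that f_1/f_0 is strictly increasing on [a,b]. If there exist strictly increasing nodes t_{n,0} < t_{n,1} < ⋯ < t_{n,n} in [a,b] and strictly positive weights α_{n,0},…,α_{n,n} such that the operator B_n f = Σ_{k=0}^n f(t_{n,k}) α_{n,k} p_{n,k} fixes f_0 and f_1, then (f_1/f_0)′(x) > 0 for all x ∈ [a,b]. -/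
/-!
Put `A_j = f₀(t_j) α_j p_j` and `R_j = (f₁/f₀)(t_j)`, so that `f₀ = ∑ A_j`, `f₁ = ∑ R_j A_j` and
`R` is strictly increasing. Summation by parts gives `(f₁/f₀)' = -∑_{i<n} (R_{i+1} - R_i) G_i'`
with `G_i = (A_0 + ⋯ + A_i)/f₀`. Since `G_i - 1` has a zero of order `i + 1` at `a` and `G_i` one
of order `n - i` at `b`, the triangular zero pattern of the basis `q` forces `G_i' = c_i q_i`, and
`c_i < 0` because `G_i` falls from `1` at `a` to `0` at `b`. So `(f₁/f₀)'` is a positive combination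
of the `q_i`, which are non-negative and have no common zero on `[a, b]`.
-/

open Set Filter Topology

noncomputable section

open Finset

section IteratedDeriv

variable {𝕜 : Type*} [NontriviallyNormedField 𝕜] {F : Type*} [NormedAddCommGroup F]
  [NormedSpace 𝕜 F] {x : 𝕜}

theorem iteratedDeriv_mul_eq_zero_of_forall_le {u v : 𝕜 → 𝕜} {k : ℕ} (hu : ContDiffAt 𝕜 k u x)
    (hv : ContDiffAt 𝕜 k v x) (h : ∀ j ≤ k, iteratedDeriv j u x = 0) :
    iteratedDeriv k (u * v) x = 0 := by
  rw [iteratedDeriv_mul hu hv]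
  exact sum_eq_zero fun j hj => by
    rw [h j (Nat.lt_succ_iff.mp (mem_range.mp hj)), mul_zero, zero_mul]

theorem iteratedDeriv_deriv_div_eq_zero {u v : 𝕜 → 𝕜} {k : ℕ} (c : 𝕜) (hu : ContDiffAt 𝕜 k u x)
    (hv : ContDiffAt 𝕜 k v x) (hvx : v x ≠ 0)
    (h : ∀ j < k, iteratedDeriv j (u - c • v) x = 0) :
    ∀ j < k - 1, iteratedDeriv j (deriv fun y => u y / v y) x = 0 := by
  intro j hj
  have hle : ((j + 1 : ℕ) : WithTop ℕ∞) ≤ k := by exact_mod_cast (by omega : j + 1 ≤ k)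
  have hquot : (fun y => u y / v y) =ᶠ[𝓝 x] fun y => c + ((u - c • v) * v⁻¹) y := by
    filter_upwards [hv.continuousAt.eventually_ne hvx] with y hy
    simp only [Pi.mul_apply, Pi.sub_apply, Pi.smul_apply, Pi.inv_apply, smul_eq_mul]
    field_simp
    ring
  rw [← iteratedDeriv_succ', hquot.iteratedDeriv_eq, iteratedDeriv_const_add j.succ_pos]
  exact iteratedDeriv_mul_eq_zero_of_forall_le ((hu.sub (hv.const_smul c)).of_le hle)
    ((hv.inv hvx).of_le hle) fun i hi => h i (by omega)

theorem coeff_eq_zero_of_iteratedDeriv_sum_eq_zero {ι : Type*} [Fintype ι] {q : ι → 𝕜 → F}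
    {c : ι → 𝕜} {ord : ι → ℕ} (hord : Function.Injective ord) {K : ℕ}
    (hq : ∀ m, ContDiffAt 𝕜 K (q m) x) (hq0 : ∀ m, ∀ j < ord m, iteratedDeriv j (q m) x = 0)
    (hq1 : ∀ m, iteratedDeriv (ord m) (q m) x ≠ 0)
    (h : ∀ j < K, iteratedDeriv j (∑ m, c m • q m) x = 0) :
    ∀ m, ord m < K → c m = 0 := by
  intro m
  induction hk : ord m using Nat.strong_induction_on generalizing m with
  | _ k ih =>
  intro hkK
  have hsum := h k hkK
  rw [iteratedDeriv_sum (f := fun m => c m • q m)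
      fun m _ => ((hq m).of_le (by exact_mod_cast hkK.le)).const_smul (c m),
    Fintype.sum_eq_single m] at hsum
  · rw [iteratedDeriv_const_smul_field, smul_eq_zero] at hsum
    exact hsum.resolve_right (hk ▸ hq1 m)
  intro m' hm'
  rw [iteratedDeriv_const_smul_field]
  rcases lt_or_gt_of_ne (hk ▸ hord.ne hm') with hlt | hgt
  · rw [ih _ hlt m' rfl (hlt.trans hkK), zero_smul]
  · rw [hq0 m' k hgt, smul_zero]

theorem eq_smul_of_mem_span_of_iteratedDeriv_eq_zero {n : ℕ} {a b : 𝕜} {q : Fin n → 𝕜 → F}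
    (hqa : ∀ m, ContDiffAt 𝕜 (n - 1 : ℕ) (q m) a) (hqb : ∀ m, ContDiffAt 𝕜 (n - 1 : ℕ) (q m) b)
    (hqa0 : ∀ m : Fin n, ∀ j < (m : ℕ), iteratedDeriv j (q m) a = 0)
    (hqa1 : ∀ m : Fin n, iteratedDeriv m (q m) a ≠ 0)
    (hqb0 : ∀ m : Fin n, ∀ j < n - 1 - m, iteratedDeriv j (q m) b = 0)
    (hqb1 : ∀ m : Fin n, iteratedDeriv (n - 1 - m) (q m) b ≠ 0)
    {g : 𝕜 → F} (hg : g ∈ Submodule.span 𝕜 (range q)) (i : Fin n)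
    (hga : ∀ j < (i : ℕ), iteratedDeriv j g a = 0)
    (hgb : ∀ j < n - 1 - i, iteratedDeriv j g b = 0) :
    ∃ c : 𝕜, g = c • q i := by
  obtain ⟨c, rfl⟩ := (Submodule.mem_span_range_iff_exists_fun 𝕜).mp hg
  refine ⟨c i, Fintype.sum_eq_single i fun m hm => ?_⟩
  suffices c m = 0 by rw [this, zero_smul]
  rcases lt_or_gt_of_ne (Fin.val_ne_of_ne hm) with hmi | hmi
  · exact coeff_eq_zero_of_iteratedDeriv_sum_eq_zero Fin.val_injective
      (fun m => (hqa m).of_le (by exact_mod_cast (by omega : (i : ℕ) ≤ n - 1))) hqa0 hqa1 hga m hmi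
  · exact coeff_eq_zero_of_iteratedDeriv_sum_eq_zero (ord := fun m : Fin n => n - 1 - m)
      (fun m m' h => Fin.ext (by have := m.2; have := m'.2; simp only at h; omega))
      (fun m => (hqb m).of_le (by exact_mod_cast (by omega : n - 1 - i ≤ n - 1))) hqb0 hqb1 hgb m
      (by have := m.2; omega)

theorem deriv_div_eq_neg_sum {ι : Type*} (s : Finset ι) {f₀ f₁ : 𝕜 → 𝕜} {S : ι → 𝕜 → 𝕜} {r : 𝕜}
    {w : ι → 𝕜} (h : f₁ = r • f₀ - ∑ i ∈ s, w i • S i) (hf₀ : DifferentiableAt 𝕜 f₀ x)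
    (hx : f₀ x ≠ 0) (hS : ∀ i ∈ s, DifferentiableAt 𝕜 (S i) x) :
    deriv (fun y => f₁ y / f₀ y) x = -∑ i ∈ s, w i * deriv (fun y => S i y / f₀ y) x := by
  have hquot : (fun y => f₁ y / f₀ y) =ᶠ[𝓝 x] fun y => r - ∑ i ∈ s, w i * (S i y / f₀ y) := by
    filter_upwards [hf₀.continuousAt.eventually_ne hx] with y hy
    simp only [h, Pi.sub_apply, Pi.smul_apply, smul_eq_mul, Finset.sum_apply, sub_div, sum_div]
    field_simp
  rw [hquot.deriv_eq, deriv_const_sub,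
    deriv_fun_sum fun i hi => ((hS i hi).fun_div hf₀ hx).const_mul (w i)]
  simp only [deriv_const_mul_field']

end IteratedDeriv

theorem neg_of_deriv_eq_smul {G q : ℝ → ℝ} {a b c : ℝ} (hab : a ≤ b)
    (hG : ContinuousOn G (Icc a b)) (hG' : DifferentiableOn ℝ G (Ioo a b))
    (hderiv : deriv G = c • q) (hq : ∀ x ∈ Ioo a b, 0 < q x) (hGab : G b < G a) : c < 0 := by
  by_contra! hc
  have hmono : MonotoneOn G (Icc a b) := monotoneOn_of_deriv_nonneg (convex_Icc a b) hG
    (by rwa [interior_Icc]) fun x hx => by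
      rw [interior_Icc] at hx
      simpa [hderiv] using mul_nonneg hc (hq x hx).le
  exact hGab.not_ge (hmono (left_mem_Icc.2 hab) (right_mem_Icc.2 hab) hab)

theorem nonneg_of_pos_on_Ioo {q : ℝ → ℝ} {a b : ℝ} (hab : a < b) (hq : ContinuousOn q (Icc a b))
    (hpos : ∀ x ∈ Ioo a b, 0 < q x) {x : ℝ} (hx : x ∈ Icc a b) : 0 ≤ q x := by
  rw [← closure_Ioo hab.ne] at hq hx
  exact le_on_closure (fun y hy => (hpos y hy).le) continuousOn_const hq hx

theorem exists_apply_ne_zero_of_bernstein {n : ℕ} (hn : 0 < n) {a b : ℝ} {q : Fin n → ℝ → ℝ}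
    (hqa1 : ∀ m : Fin n, iteratedDeriv m (q m) a ≠ 0)
    (hqb1 : ∀ m : Fin n, iteratedDeriv (n - 1 - m) (q m) b ≠ 0)
    (hqpos : ∀ m, ∀ x ∈ Ioo a b, 0 < q m x) {x : ℝ} (hx : x ∈ Icc a b) : ∃ m, q m x ≠ 0 := by
  rcases hx.1.eq_or_lt with rfl | hax
  · exact ⟨⟨0, hn⟩, by simpa using hqa1 ⟨0, hn⟩⟩
  rcases hx.2.eq_or_lt with rfl | hxb
  · exact ⟨⟨n - 1, by omega⟩, by simpa using hqb1 ⟨n - 1, by omega⟩⟩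
  exact ⟨⟨0, hn⟩, (hqpos _ x ⟨hax, hxb⟩).ne'⟩

section PartialSums

variable {n : ℕ} {a b : ℝ} {A : ℕ → ℝ → ℝ} {f₀ : ℝ → ℝ}

theorem contDiff_sum_range (hA : ∀ j, ContDiff ℝ n (A j)) (i : ℕ) :
    ContDiff ℝ n (∑ j ∈ range i, A j) := by
  rw [sum_fn]
  exact ContDiff.sum fun j _ => hA j

theorem iteratedDeriv_sum_range_sub_eq_zero (hA : ∀ j, ContDiff ℝ n (A j))
    (hf₀A : f₀ = ∑ j ∈ range (n + 1), A j) (hAa : ∀ j ≤ n, ∀ m < j, iteratedDeriv m (A j) a = 0)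
    {i : ℕ} (hi : i ≤ n) :
    ∀ m < i + 1, iteratedDeriv m (∑ j ∈ range (i + 1), A j - f₀) a = 0 := by
  intro m hm
  have hAm : ∀ j, ContDiffAt ℝ m (A j) a := fun j =>
    (hA j).contDiffAt.of_le (by exact_mod_cast (by omega : m ≤ n))
  rw [hf₀A, ← sum_range_add_sum_Ico _ (by omega : i + 1 ≤ n + 1), sub_add_cancel_left,
    iteratedDeriv_neg, iteratedDeriv_sum fun j _ => hAm j, neg_eq_zero]
  exact sum_eq_zero fun j hj => hAa j (by simp at hj; omega) m (by simp at hj; omega)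

theorem iteratedDeriv_sum_range_eq_zero (hA : ∀ j, ContDiff ℝ n (A j))
    (hAb : ∀ j ≤ n, ∀ m < n - j, iteratedDeriv m (A j) b = 0) {i : ℕ} (hi : i ≤ n) :
    ∀ m < n - i, iteratedDeriv m (∑ j ∈ range (i + 1), A j) b = 0 := by
  intro m hm
  rw [iteratedDeriv_sum fun j _ => (hA j).contDiffAt.of_le (by exact_mod_cast (by omega : m ≤ n))]
  exact sum_eq_zero fun j hj => hAb j (by simp at hj; omega) m (by simp at hj; omega)

theorem exists_neg_deriv_sum_range_div_eq_smul (hab : a < b) (hA : ∀ j, ContDiff ℝ n (A j))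
    (hf₀A : f₀ = ∑ j ∈ range (n + 1), A j) (hf₀ : ∀ x ∈ Icc a b, f₀ x ≠ 0)
    (hAa : ∀ j ≤ n, ∀ m < j, iteratedDeriv m (A j) a = 0)
    (hAb : ∀ j ≤ n, ∀ m < n - j, iteratedDeriv m (A j) b = 0)
    {q : Fin n → ℝ → ℝ} (hq : ∀ m, ∀ x ∈ Icc a b, ContDiffAt ℝ (n - 1 : ℕ) (q m) x)
    (hqa0 : ∀ m : Fin n, ∀ j < (m : ℕ), iteratedDeriv j (q m) a = 0)
    (hqa1 : ∀ m : Fin n, iteratedDeriv m (q m) a ≠ 0)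
    (hqb0 : ∀ m : Fin n, ∀ j < n - 1 - m, iteratedDeriv j (q m) b = 0)
    (hqb1 : ∀ m : Fin n, iteratedDeriv (n - 1 - m) (q m) b ≠ 0)
    (hqpos : ∀ m, ∀ x ∈ Ioo a b, 0 < q m x) (i : Fin n)
    (hspan : deriv (fun y => (∑ j ∈ range (i + 1), A j) y / f₀ y) ∈ Submodule.span ℝ (range q)) :
    ∃ c < (0 : ℝ), deriv (fun y => (∑ j ∈ range (i + 1), A j) y / f₀ y) = c • q i := by
  have hS := contDiff_sum_range hA (i + 1)
  have hf₀' : ContDiff ℝ n f₀ := hf₀A ▸ contDiff_sum_range hA (n + 1)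
  have hSa := iteratedDeriv_sum_range_sub_eq_zero hA hf₀A hAa i.2.le
  have hSb := iteratedDeriv_sum_range_eq_zero hA hAb (b := b) i.2.le
  set S := ∑ j ∈ range (i + 1), A j
  have ha := Set.left_mem_Icc.2 hab.le
  have hb := Set.right_mem_Icc.2 hab.le
  have hG'a : ∀ j < (i : ℕ), iteratedDeriv j (deriv fun y => S y / f₀ y) a = 0 := by
    have hle : ((i + 1 : ℕ) : WithTop ℕ∞) ≤ n := by exact_mod_cast i.2
    simpa using iteratedDeriv_deriv_div_eq_zero (1 : ℝ) (hS.contDiffAt.of_le hle)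
      (hf₀'.contDiffAt.of_le hle) (hf₀ a ha) (by simpa only [one_smul] using hSa)
  have hG'b : ∀ j < n - 1 - i, iteratedDeriv j (deriv fun y => S y / f₀ y) b = 0 := by
    intro j hj
    have hle : ((n - i : ℕ) : WithTop ℕ∞) ≤ n := by exact_mod_cast Nat.sub_le n i
    exact iteratedDeriv_deriv_div_eq_zero (0 : ℝ) (hS.contDiffAt.of_le hle)
      (hf₀'.contDiffAt.of_le hle) (hf₀ b hb) (by simpa only [zero_smul, sub_zero] using hSb) j
      (by omega)
  obtain ⟨c, hc⟩ := eq_smul_of_mem_span_of_iteratedDeriv_eq_zero (hq · a ha) (hq · b hb)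
    hqa0 hqa1 hqb0 hqb1 hspan i hG'a hG'b
  have hGa : S a / f₀ a = 1 := by
    have := hSa 0 (by omega)
    rw [iteratedDeriv_zero, Pi.sub_apply, sub_eq_zero] at this
    rw [this, div_self (hf₀ a ha)]
  have hGb : S b / f₀ b = 0 := by
    have := hSb 0 (by omega)
    rw [iteratedDeriv_zero] at this
    rw [this, zero_div]
  have hG : ∀ x ∈ Icc a b, ContDiffAt ℝ n (fun y => S y / f₀ y) x := fun x hx =>
    hS.contDiffAt.div hf₀'.contDiffAt (hf₀ x hx)
  refine ⟨c, neg_of_deriv_eq_smul hab.le (fun x hx => (hG x hx).continuousAt.continuousWithinAt)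
    (fun x hx => ((hG x (Ioo_subset_Icc_self hx)).differentiableAt
      (by exact_mod_cast i.pos.ne')).differentiableWithinAt) hc (hqpos i) ?_, hc⟩
  rw [hGa, hGb]
  exact one_pos

theorem deriv_div_pos_of_sum_range_smul (hab : a < b) (hn : 0 < n) (hA : ∀ j, ContDiff ℝ n (A j))
    (hf₀A : f₀ = ∑ j ∈ range (n + 1), A j) (hf₀ : ∀ x ∈ Icc a b, f₀ x ≠ 0)
    (hAa : ∀ j ≤ n, ∀ m < j, iteratedDeriv m (A j) a = 0)
    (hAb : ∀ j ≤ n, ∀ m < n - j, iteratedDeriv m (A j) b = 0)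
    {R : ℕ → ℝ} {f₁ : ℝ → ℝ} (hf₁A : f₁ = ∑ j ∈ range (n + 1), R j • A j)
    (hR : ∀ i < n, R i < R (i + 1))
    {q : Fin n → ℝ → ℝ} (hq : ∀ m, ∀ x ∈ Icc a b, ContDiffAt ℝ (n - 1 : ℕ) (q m) x)
    (hqa0 : ∀ m : Fin n, ∀ j < (m : ℕ), iteratedDeriv j (q m) a = 0)
    (hqa1 : ∀ m : Fin n, iteratedDeriv m (q m) a ≠ 0)
    (hqb0 : ∀ m : Fin n, ∀ j < n - 1 - m, iteratedDeriv j (q m) b = 0)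
    (hqb1 : ∀ m : Fin n, iteratedDeriv (n - 1 - m) (q m) b ≠ 0)
    (hqpos : ∀ m, ∀ x ∈ Ioo a b, 0 < q m x)
    (hspan : ∀ i : Fin n,
      deriv (fun y => (∑ j ∈ range (i + 1), A j) y / f₀ y) ∈ Submodule.span ℝ (range q)) :
    ∀ x ∈ Icc a b, 0 < deriv (fun y => f₁ y / f₀ y) x := by
  choose c hc hderiv using fun i => exists_neg_deriv_sum_range_div_eq_smul hab hA hf₀A hf₀ hAa
    hAb hq hqa0 hqa1 hqb0 hqb1 hqpos i (hspan i)
  have habel : f₁ = R n • f₀ - ∑ i ∈ range n, (R (i + 1) - R i) • ∑ j ∈ range (i + 1), A j := by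
    simpa [hf₀A, hf₁A] using sum_range_by_parts R A (n + 1)
  have hdiff : ∀ {f : ℝ → ℝ}, ContDiff ℝ n f → Differentiable ℝ f := fun hf =>
    hf.differentiable (by exact_mod_cast hn.ne')
  intro x hx
  rw [deriv_div_eq_neg_sum _ habel (hdiff (hf₀A ▸ contDiff_sum_range hA (n + 1)) x) (hf₀ x hx)
      fun i _ => hdiff (contDiff_sum_range hA (i + 1)) x,
    ← Fin.sum_univ_eq_sum_range
      (fun i => (R (i + 1) - R i) * deriv (fun y => (∑ j ∈ range (i + 1), A j) y / f₀ y) x),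
    ← sum_neg_distrib]
  simp only [hderiv, Pi.smul_apply, smul_eq_mul]
  have hqnn : ∀ i, 0 ≤ q i x := fun i => nonneg_of_pos_on_Ioo hab
    (fun y hy => (hq i y hy).continuousAt.continuousWithinAt) (hqpos i) hx
  obtain ⟨m, hm⟩ := exists_apply_ne_zero_of_bernstein hn hqa1 hqb1 hqpos hx
  refine sum_pos' (fun i _ => ?_) ⟨m, mem_univ m, ?_⟩
  · exact neg_nonneg.2 (mul_nonpos_of_nonneg_of_nonpos (sub_pos.2 (hR i i.2)).le
      (mul_nonpos_of_nonpos_of_nonneg (hc i).le (hqnn i)))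
  · exact neg_pos.2 (mul_neg_of_pos_of_neg (sub_pos.2 (hR m m.2))
      (mul_neg_of_neg_of_pos (hc m) ((hqnn m).lt_of_ne' hm)))

end PartialSums

theorem exists_sum_range_decomposition {n : ℕ} {a b : ℝ} {U : Submodule ℝ (ℝ → ℝ)}
    {p : Fin (n + 1) → ℝ → ℝ} (hp : IsBernsteinBasisOf a b n U p) {f₀ f₁ : ℝ → ℝ}
    (hf₀ : ∀ x ∈ Icc a b, 0 < f₀ x) (hmono : StrictMonoOn (fun x => f₁ x / f₀ x) (Icc a b))
    {t α : Fin (n + 1) → ℝ} (ht : StrictMono t) (htmem : ∀ k, t k ∈ Icc a b)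
    (hB₀ : ∀ x, ∑ k, f₀ (t k) * α k * p k x = f₀ x)
    (hB₁ : ∀ x, ∑ k, f₁ (t k) * α k * p k x = f₁ x) :
    ∃ (A : ℕ → ℝ → ℝ) (R : ℕ → ℝ), (∀ j, A j ∈ U) ∧ f₀ = ∑ j ∈ range (n + 1), A j ∧
      f₁ = ∑ j ∈ range (n + 1), R j • A j ∧ (∀ i < n, R i < R (i + 1)) ∧
      (∀ j ≤ n, ∀ m < j, iteratedDeriv m (A j) a = 0) ∧
      (∀ j ≤ n, ∀ m < n - j, iteratedDeriv m (A j) b = 0) := by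
  -- Clamping extends the data indexed by `Fin (n + 1)` to `ℕ`, where summation by parts lives.
  set e : ℕ → Fin (n + 1) := fun j => Fin.clamp j n
  have he : ∀ k : Fin (n + 1), e k = k := fun k => Fin.ext (by simp [e, Nat.lt_succ_iff.mp k.2])
  have hej : ∀ j ≤ n, (e j : ℕ) = j := fun j hj => by simp [e, hj]
  have hsum : ∀ (w : Fin (n + 1) → ℝ) (f : ℝ → ℝ), (∀ x, ∑ k, w k * p k x = f x) →
      f = ∑ j ∈ range (n + 1), w (e j) • p (e j) := by
    intro w f h
    funext x
    rw [← h x, Finset.sum_apply, ← Fin.sum_univ_eq_sum_range (fun j => (w (e j) • p (e j)) x)]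
    simp [he]
  refine ⟨fun j => (f₀ (t (e j)) * α (e j)) • p (e j), fun j => f₁ (t (e j)) / f₀ (t (e j)),
    fun j => U.smul_mem _ (hp.1 _), hsum _ _ hB₀, ?_, fun i hi => ?_, fun j hj m hm => ?_,
    fun j hj m hm => ?_⟩
  · refine (hsum _ _ hB₁).trans (sum_congr rfl fun j _ => ?_)
    rw [smul_smul]
    field_simp [(hf₀ _ (htmem (e j))).ne']
  · exact hmono (htmem _) (htmem _)
      (ht (Fin.lt_def.2 (by rw [hej i hi.le, hej (i + 1) hi]; omega)))
  · simp [iteratedDeriv_const_smul_field, (hp.2.2.2 (e j)).1 m (by rwa [hej j hj])]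
  · simp [iteratedDeriv_const_smul_field, (hp.2.2.2 (e j)).2.2.1 m (by rwa [hej j hj])]

theorem deriv_ratio_pos_of_strictMono_nodes_general
    (n : ℕ) (a b : ℝ) (hab : a < b)
    (U : Submodule ℝ (ℝ → ℝ))
    (hUsmooth : ∀ f ∈ U, ContDiff ℝ (n : ℕ∞) f)
    (p : Fin (n + 1) → ℝ → ℝ)
    (hp : IsBernsteinBasisOf a b n U p)
    (f₀ f₁ : ℝ → ℝ) (hf₀U : f₀ ∈ U)
    (hf₀pos : ∀ x ∈ Set.Icc a b, 0 < f₀ x)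
    (q : Fin n → ℝ → ℝ)
    (hq : IsBernsteinBasisOfD a b n f₀ U q)
    (hqpos : ∀ k, ∀ x ∈ Set.Ioo a b, 0 < q k x)
    (hmono : StrictMonoOn (fun x => f₁ x / f₀ x) (Set.Icc a b))
    (t : Fin (n + 1) → ℝ) (α : Fin (n + 1) → ℝ)
    (ht : StrictMono t) (htmem : ∀ k, t k ∈ Set.Icc a b)
    (hB₀ : ∀ x, ∑ k, f₀ (t k) * α k * p k x = f₀ x)
    (hB₁ : ∀ x, ∑ k, f₁ (t k) * α k * p k x = f₁ x) :
    ∀ x ∈ Set.Icc a b, 0 < deriv (fun y => f₁ y / f₀ y) x := by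
  obtain ⟨A, R, hAU, hf₀A, hf₁A, hR, hAa, hAb⟩ :=
    exists_sum_range_decomposition hp hf₀pos hmono ht htmem hB₀ hB₁
  have hf₀ : ∀ x ∈ Icc a b, f₀ x ≠ 0 := fun x hx => (hf₀pos x hx).ne'
  rcases n.eq_zero_or_pos with rfl | hn
  · have hf₁ : f₁ = R 0 • f₀ := by simp [hf₁A, hf₀A]
    have hratio : ∀ x ∈ Icc a b, f₁ x / f₀ x = R 0 := fun x hx => by simp [hf₁, hf₀ x hx]
    have hab' := hmono (left_mem_Icc.2 hab.le) (right_mem_Icc.2 hab.le) hab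
    simp only [hratio _ (left_mem_Icc.2 hab.le), hratio _ (right_mem_Icc.2 hab.le)] at hab'
    exact absurd hab' (lt_irrefl _)
  refine deriv_div_pos_of_sum_range_smul hab hn (fun j => hUsmooth _ (hAU j)) hf₀A hf₀ hAa hAb
    hf₁A hR (fun m x hx => ?_) (fun m => (hq.2.2.2 m).1) (fun m => (hq.2.2.2 m).2.1)
    (fun m => (hq.2.2.2 m).2.2.1) (fun m => (hq.2.2.2 m).2.2.2) hqpos
    fun i => hq.2.1 _ (U.sum_mem fun j _ => hAU j)
  obtain ⟨g, hg, hqm⟩ := hq.1 m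
  rw [hqm]
  exact ((hUsmooth g hg).contDiffAt.div (hUsmooth f₀ hf₀U).contDiffAt (hf₀ x hx)).derivWithin
    (by rw [← Nat.cast_add_one, Nat.sub_add_cancel hn]; rfl)

/-- Corollary: if a generalized Bernstein operator with strictly increasing nodes fixing `f₀`
and `f₁` exists, then `(f₁/f₀)' > 0` on the closed interval `[a,b]`. -/
theorem deriv_ratio_pos_of_strictMono_nodes
    (n : ℕ) (a b : ℝ) (hab : a < b)
    (U : Submodule ℝ (ℝ → ℝ))
    (hUdim : Module.finrank ℝ ↥U = n + 1)
    (hUsmooth : ∀ f ∈ U, ContDiff ℝ (n : ℕ∞) f)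
    (p : Fin (n + 1) → ℝ → ℝ)
    (hp : IsBernsteinBasisOf a b n U p)
    (hpnn : ∀ k, ∀ x ∈ Set.Icc a b, 0 ≤ p k x)
    (f₀ f₁ : ℝ → ℝ) (hf₀U : f₀ ∈ U) (hf₁U : f₁ ∈ U)
    (hf₀pos : ∀ x ∈ Set.Icc a b, 0 < f₀ x)
    (q : Fin n → ℝ → ℝ)
    (hq : IsBernsteinBasisOfD a b n f₀ U q)
    (hqpos : ∀ k, ∀ x ∈ Set.Ioo a b, 0 < q k x)
    (hmono : StrictMonoOn (fun x => f₁ x / f₀ x) (Set.Icc a b))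
    (t : Fin (n + 1) → ℝ) (α : Fin (n + 1) → ℝ)
    (ht : StrictMono t) (htmem : ∀ k, t k ∈ Set.Icc a b) (hα : ∀ k, 0 < α k)
    (hB₀ : ∀ x, ∑ k, f₀ (t k) * α k * p k x = f₀ x)
    (hB₁ : ∀ x, ∑ k, f₁ (t k) * α k * p k x = f₁ x) :
    ∀ x ∈ Set.Icc a b, 0 < deriv (fun y => f₁ y / f₀ y) x :=
  deriv_ratio_pos_of_strictMono_nodes_general n a b hab U hUsmooth p hp f₀ f₁ hf₀U hf₀pos q hq hqpos
    hmono t α ht htmem hB₀ hB₁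
end
end
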